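/- Let F be a spanning forest of K_n and let H_1, H_2 be forests of K_n that are F-disjoint (no vertex of H_1 lies in the same connected component of F as any vertex of H_2). Let T be uniformly random among spanning trees of K_n containing F. Then P(H_1 ⊆ T and H_2 ⊆ T) = P(H_1 ⊆ T)·P(H_2 ⊆ T), i.e., the events A_{H_1} and A_{H_2} are independent. -/

import Mathlib

/-!
Write `τ(G)` for the number of spanning trees of `K_n` containing a forest `G` with
components `C₁, …, C_k`. The generalized Cayley formula `τ(G) = n^(k-2) ∏ |Cᵢ|` is proved by
induction on `k`: every tree above `G` has exactly `k - 1` edges joining distinct components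
of `G`, so double counting gives `2 (k - 1) τ(G) = ∑ τ(G + uv)` over ordered pairs `(u, v)` in
distinct components. By induction `τ(G + uv) = n^(k-3) ∏ |Cᵢ| (1/|C(u)| + 1/|C(v)|)`, and
`∑ (1/|C(u)| + 1/|C(v)|) = 2 n (k - 1)`.

If `H₁` and `H₂` are `F`-disjoint, let `R` be the union of the components of `F` meeting `H₂`.
Inside `R` the components of `F ⊔ H₁ ⊔ H₂` are those of `F ⊔ H₂` and the components of
`F ⊔ H₁` are those of `F`; outside `R` the roles of `H₁` and `H₂` are exchanged. So the
products in the Cayley formula give `τ(F ⊔ H₁ ⊔ H₂) τ(F) = τ(F ⊔ H₁) τ(F ⊔ H₂)`, which is the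
independence.
-/

open Finset

namespace SimpleGraph

open scoped Classical

variable {V : Type*}

section SupEdge

variable {G T : SimpleGraph V} {u v : V}

lemma reachable_sup_edge : (G ⊔ edge u v).Reachable u v := by
  by_cases h : u = v
  · exact h ▸ .rfl
  · exact Adj.reachable (Or.inr ((edge_adj ..).mpr ⟨.inl ⟨rfl, rfl⟩, h⟩))

lemma reachable_sup_edge_iff {x y : V} :
    (G ⊔ edge u v).Reachable x y ↔
      G.Reachable x y ∨ G.Reachable x u ∧ G.Reachable v y ∨
        G.Reachable x v ∧ G.Reachable u y := by
  refine ⟨?_, ?_⟩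
  · rintro ⟨p⟩
    induction p with
    | nil => exact .inl .rfl
    | cons h _ ih =>
      rcases h with h | h
      · have := h.reachable
        grind [Reachable.trans]
      · rw [edge_adj] at h
        grind [Reachable.trans, Reachable.symm, Reachable.rfl]
  · have hle : G ≤ G ⊔ edge u v := le_sup_left
    rintro (h | ⟨h₁, h₂⟩ | ⟨h₁, h₂⟩)
    · exact h.mono hle
    · exact (h₁.mono hle).trans (reachable_sup_edge.trans (h₂.mono hle))
    · exact (h₁.mono hle).trans (reachable_sup_edge.symm.trans (h₂.mono hle))

lemma ne_of_not_reachable (h : ¬G.Reachable u v) : u ≠ v := by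
  rintro rfl
  exact h .rfl

lemma deleteEdges_sup_edge (h : G.Adj u v) :
    G.deleteEdges {s(u, v)} ⊔ edge u v = G := by
  ext x y
  simp only [sup_adj, deleteEdges_adj, edge_adj, Set.mem_singleton_iff, Sym2.eq_iff]
  grind [Adj.ne, adj_symm]

lemma IsAcyclic.adj_of_le_of_reachable (hT : T.IsAcyclic) (hle : G ≤ T) (ha : T.Adj u v)
    (hr : G.Reachable u v) : G.Adj u v := by
  obtain ⟨p⟩ := hr
  have := isBridge_iff_forall_walk_mem_edges.mp (isAcyclic_iff_forall_adj_isBridge.mp hT ha)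
    (p.mapLe hle)
  rw [Walk.edges_mapLe_eq_edges] at this
  exact p.adj_of_mem_edges this

end SupEdge

section Components

variable [Fintype V] (G : SimpleGraph V)

noncomputable def component (v : V) : Finset V := {w | G.Reachable v w}

noncomputable def components : Finset (Finset V) := univ.image G.component

variable {G}

@[simp]
lemma mem_component {v w : V} : w ∈ G.component v ↔ G.Reachable v w := by
  simp [component]

lemma component_eq_component_iff {u v : V} : G.component u = G.component v ↔ G.Reachable u v :=
  ⟨fun h => mem_component.mp (h ▸ mem_component.mpr .rfl),
    fun h => ext fun _ => by simpa using ⟨h.symm.trans, h.trans⟩⟩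

lemma component_mem_components (v : V) : G.component v ∈ G.components :=
  mem_image_of_mem _ (mem_univ v)

lemma mem_components {s : Finset V} : s ∈ G.components ↔ ∃ v, G.component v = s := by
  simp [components]

lemma card_component_pos (v : V) : 0 < #(G.component v) :=
  card_pos.mpr ⟨v, mem_component.mpr .rfl⟩

lemma component_eq_of_mem {s : Finset V} (hs : s ∈ G.components) {v : V} (hv : v ∈ s) :
    G.component v = s := by
  obtain ⟨u, rfl⟩ := mem_components.mp hs
  exact component_eq_component_iff.mpr (mem_component.mp hv).symm

variable (G) in
noncomputable def unreachablePairs : Finset (V × V) := {p | ¬G.Reachable p.1 p.2}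

@[simp]
lemma mem_unreachablePairs {p : V × V} : p ∈ G.unreachablePairs ↔ ¬G.Reachable p.1 p.2 := by
  simp [unreachablePairs]

lemma sum_comp_component {M : Type*} [AddCommMonoid M] (f : Finset V → M) :
    ∑ v, f (G.component v) = ∑ s ∈ G.components, #s • f s := by
  rw [sum_comp]
  refine sum_congr rfl fun s hs => ?_
  congr 2
  ext v
  simp only [mem_filter, mem_univ, true_and]
  exact ⟨fun h => h ▸ mem_component.mpr .rfl, component_eq_of_mem hs⟩

lemma sum_inv_card_component : ∑ v, (#(G.component v) : ℝ)⁻¹ = #G.components := by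
  rw [sum_comp_component (fun s => (#s : ℝ)⁻¹), card_eq_sum_ones, Nat.cast_sum]
  refine sum_congr rfl fun s hs => ?_
  obtain ⟨v, rfl⟩ := mem_components.mp hs
  have := (card_component_pos (G := G) v).ne'
  simp [this]

lemma sum_card_components : ∑ s ∈ G.components, #s = Fintype.card V := by
  simpa using (sum_comp_component (G := G) fun _ => (1 : ℕ)).symm

end Components

section AddEdge

variable [Fintype V] {G : SimpleGraph V} {u v : V}

lemma component_sup_edge_of_reachable {w : V} (hw : G.Reachable u w ∨ G.Reachable v w) :
    (G ⊔ edge u v).component w = G.component u ∪ G.component v := by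
  ext x
  simp only [mem_component, mem_union, reachable_sup_edge_iff]
  grind [Reachable.trans, Reachable.symm]

lemma component_sup_edge_of_not_reachable {w : V} (hu : ¬G.Reachable u w)
    (hv : ¬G.Reachable v w) : (G ⊔ edge u v).component w = G.component w := by
  ext x
  simp only [mem_component, reachable_sup_edge_iff]
  grind [Reachable.symm]

lemma components_sup_edge :
    (G ⊔ edge u v).components =
      insert (G.component u ∪ G.component v)
        ((G.components.erase (G.component u)).erase (G.component v)) := by
  ext s
  simp only [mem_insert, mem_erase, mem_components]
  constructor
  · rintro ⟨w, rfl⟩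
    by_cases hw : G.Reachable u w ∨ G.Reachable v w
    · exact .inl (component_sup_edge_of_reachable hw)
    · push Not at hw
      rw [component_sup_edge_of_not_reachable hw.1 hw.2]
      refine .inr ⟨?_, ?_, w, rfl⟩ <;> rw [Ne, component_eq_component_iff]
      exacts [fun h => hw.2 h.symm, fun h => hw.1 h.symm]
  · rintro (rfl | ⟨hv, hu, w, rfl⟩)
    · exact ⟨u, component_sup_edge_of_reachable (.inl .rfl)⟩
    · rw [Ne, component_eq_component_iff] at hu hv
      exact ⟨w, component_sup_edge_of_not_reachable (fun h => hu h.symm) fun h => hv h.symm⟩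

lemma component_mem_erase_component (huv : ¬G.Reachable u v) :
    G.component v ∈ G.components.erase (G.component u) :=
  mem_erase.mpr ⟨fun h => huv (component_eq_component_iff.mp h.symm), component_mem_components v⟩

lemma component_union_notMem :
    G.component u ∪ G.component v ∉
      (G.components.erase (G.component u)).erase (G.component v) := by
  simp only [mem_erase, not_and]
  rintro - hne hs
  exact hne (component_eq_of_mem hs (mem_union_left _ (mem_component.mpr .rfl))).symm

lemma card_components_sup_edge (huv : ¬G.Reachable u v) :
    #(G ⊔ edge u v).components + 1 = #G.components := by
  rw [components_sup_edge, card_insert_of_notMem component_union_notMem,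
    card_erase_add_one (component_mem_erase_component huv),
    card_erase_add_one (component_mem_components u)]

lemma prod_components_sup_edge {M : Type*} [CommMonoid M] (huv : ¬G.Reachable u v)
    (f : Finset V → M) :
    (∏ s ∈ (G ⊔ edge u v).components, f s) * (f (G.component u) * f (G.component v)) =
      (∏ s ∈ G.components, f s) * f (G.component u ∪ G.component v) := by
  rw [components_sup_edge, prod_insert component_union_notMem,
    ← mul_prod_erase _ f (component_mem_components u),
    ← mul_prod_erase _ f (component_mem_erase_component huv)]
  ac_rfl

lemma card_component_union (huv : ¬G.Reachable u v) :
    #(G.component u ∪ G.component v) = #(G.component u) + #(G.component v) := by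
  refine card_union_of_disjoint (Finset.disjoint_left.mpr fun x hu hv => huv ?_)
  exact (mem_component.mp hu).trans (mem_component.mp hv).symm

end AddEdge

section Forests

variable [Fintype V] {G : SimpleGraph V}

lemma card_components_bot : #(⊥ : SimpleGraph V).components = Fintype.card V := by
  rw [components, card_image_of_injective _ fun u v h => reachable_bot.mp
    (component_eq_component_iff.mp h), card_univ]

lemma IsAcyclic.card_edgeFinset_add_card_components (hG : G.IsAcyclic) :
    #G.edgeFinset + #G.components = Fintype.card V := by
  induction hk : #G.edgeFinset generalizing G with
  | zero =>
    rw [card_eq_zero, edgeFinset_eq_empty] at hk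
    rw [hk, card_components_bot, zero_add]
  | succ k ih =>
    obtain ⟨e, he⟩ := card_pos.mp (hk.symm ▸ k.succ_pos : 0 < #G.edgeFinset)
    induction e using Sym2.ind with | _ u v => ?_
    have huv : G.Adj u v := mem_edgeFinset.mp he
    have hsup : G = G.deleteEdges {s(u, v)} ⊔ edge u v := (deleteEdges_sup_edge huv).symm
    have hbr : ¬(G.deleteEdges {s(u, v)}).Reachable u v :=
      isAcyclic_iff_forall_adj_isBridge.mp hG huv
    have hA := hG.anti (deleteEdges_le {s(u, v)})
    generalize G.deleteEdges {s(u, v)} = G' at hsup hbr hA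
    subst hsup
    have hE : #G'.edgeFinset + 1 = k + 1 := by
      rw [← hk]
      convert (G'.card_edgeFinset_sup_edge (fun h => hbr h.reachable) huv.ne).symm
    have := ih hA (by omega)
    have := card_components_sup_edge hbr
    omega

end Forests

section SpanningTrees

variable [Fintype V] {G G' T : SimpleGraph V}

variable (G) in
noncomputable def treesAbove : Finset (SimpleGraph V) :=
  {T | G ≤ T ∧ T.Connected ∧ T.IsAcyclic}

@[simp]
lemma mem_treesAbove : T ∈ G.treesAbove ↔ G ≤ T ∧ T.Connected ∧ T.IsAcyclic := by
  simp [treesAbove]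

lemma natCard_eq_card_treesAbove {p : SimpleGraph V → Prop}
    (h : ∀ T, p T ↔ G ≤ T ∧ T.Connected ∧ T.IsAcyclic) :
    Nat.card {T // p T} = #G.treesAbove := by
  rw [Nat.card_eq_fintype_card, Fintype.card_subtype]
  congr
  ext
  simp [h]

lemma treesAbove_anti (h : G ≤ G') : G'.treesAbove ⊆ G.treesAbove := fun T hT => by
  rw [mem_treesAbove] at hT ⊢
  exact ⟨h.trans hT.1, hT.2⟩

lemma card_treesAbove_eq_zero_of_le (h : G ≤ G') (hG : #G.treesAbove = 0) :
    #G'.treesAbove = 0 :=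
  Nat.eq_zero_of_le_zero (hG ▸ card_le_card (treesAbove_anti h))

lemma isAcyclic_of_card_treesAbove_ne_zero (h : #G.treesAbove ≠ 0) : G.IsAcyclic := by
  obtain ⟨T, hT⟩ := card_ne_zero.mp h
  rw [mem_treesAbove] at hT
  exact hT.2.2.anti hT.1

lemma nonempty_of_card_treesAbove_ne_zero (h : #G.treesAbove ≠ 0) : Nonempty V := by
  obtain ⟨T, hT⟩ := card_ne_zero.mp h
  exact (mem_treesAbove.mp hT).2.1.nonempty

lemma treesAbove_sup_edge {u v : V} (huv : u ≠ v) :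
    (G ⊔ edge u v).treesAbove = {T ∈ G.treesAbove | T.Adj u v} := by
  ext T
  simp [huv]
  tauto

lemma treesAbove_eq_singleton (hc : G.Connected) (ha : G.IsAcyclic) : G.treesAbove = {G} := by
  ext T
  simp only [mem_treesAbove, mem_singleton]
  refine ⟨fun ⟨hle, _, hT⟩ => le_antisymm (fun x y h => ?_) hle, ?_⟩
  · exact hT.adj_of_le_of_reachable hle h (hc.preconnected x y)
  · rintro rfl
    exact ⟨le_rfl, hc, ha⟩

lemma card_filter_unreachablePairs_adj (hG : G.IsAcyclic) (hT : T ∈ G.treesAbove) :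
    #{p ∈ G.unreachablePairs | T.Adj p.1 p.2} = 2 * (#G.components - 1) := by
  obtain ⟨hle, hc, ha⟩ := mem_treesAbove.mp hT
  have hT := IsTree.card_edgeFinset ⟨hc, ha⟩
  have hG := hG.card_edgeFinset_add_card_components
  have hsub : G.edgeFinset ⊆ T.edgeFinset := edgeFinset_mono hle
  calc #{p ∈ G.unreachablePairs | T.Adj p.1 p.2} = #{p : V × V | (T \ G).Adj p.1 p.2} := by
        congr 1
        ext ⟨u, v⟩
        simp only [mem_filter, mem_unreachablePairs, mem_univ, true_and, sdiff_adj]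
        exact ⟨fun ⟨hr, h⟩ => ⟨h, fun h' => hr h'.reachable⟩,
          fun ⟨h, hn⟩ => ⟨fun hr => hn (ha.adj_of_le_of_reachable hle h hr), h⟩⟩
    _ = 2 * #(T \ G).edgeFinset := by convert (two_mul_card_edgeFinset (T \ G)).symm
    _ = 2 * (#G.components - 1) := by
        rw [edgeFinset_sdiff, card_sdiff_of_subset hsub]
        omega

lemma sum_card_treesAbove_sup_edge (hG : G.IsAcyclic) :
    ∑ p ∈ G.unreachablePairs, #(G ⊔ edge p.1 p.2).treesAbove =
      #G.treesAbove * (2 * (#G.components - 1)) := by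
  let r : V × V → SimpleGraph V → Prop := fun p T => T.Adj p.1 p.2
  calc _ = ∑ p ∈ G.unreachablePairs, #(G.treesAbove.bipartiteAbove r p) := by
        refine sum_congr rfl fun p hp => ?_
        rw [treesAbove_sup_edge (ne_of_not_reachable (mem_unreachablePairs.mp hp))]
        rfl
    _ = ∑ T ∈ G.treesAbove, #(G.unreachablePairs.bipartiteBelow r T) :=
        sum_card_bipartiteAbove_eq_sum_card_bipartiteBelow _
    _ = _ := sum_const_nat fun T hT => card_filter_unreachablePairs_adj hG hT

end SpanningTrees

section Cayley

variable [Fintype V] {G : SimpleGraph V}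

lemma sum_unreachablePairs_inv_card_component :
    ∑ p ∈ G.unreachablePairs,
        ((#(G.component p.1) : ℝ)⁻¹ + (#(G.component p.2) : ℝ)⁻¹) =
      2 * Fintype.card V * (#G.components - 1 : ℝ) := by
  have hswap : ∑ p ∈ G.unreachablePairs, (#(G.component p.2) : ℝ)⁻¹ =
      ∑ p ∈ G.unreachablePairs, (#(G.component p.1) : ℝ)⁻¹ :=
    sum_nbij' Prod.swap Prod.swap (by simp [reachable_comm]) (by simp [reachable_comm])
      (by simp) (by simp) (by simp)
  have hcard (u : V) : #{v | ¬G.Reachable u v} = Fintype.card V - #(G.component u) := by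
    rw [← card_compl]
    congr 1
    ext
    simp
  rw [sum_add_distrib, hswap, unreachablePairs, sum_filter, Fintype.sum_prod_type]
  simp_rw [← sum_filter, sum_const, hcard, nsmul_eq_mul,
    Nat.cast_sub (card_le_univ (G.component _)), sub_mul, sum_sub_distrib, ← mul_sum,
    sum_inv_card_component]
  simp [(card_component_pos _).ne']
  ring

lemma connected_of_card_components_eq_one [Nonempty V] (h : #G.components = 1) :
    G.Connected := by
  obtain ⟨s, hs⟩ := card_eq_one.mp h
  have (v : V) : G.component v = s := mem_singleton.mp (hs ▸ component_mem_components v)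
  refine (connected_iff _).mpr ⟨fun u v => ?_, inferInstance⟩
  exact component_eq_component_iff.mp ((this u).trans (this v).symm)

lemma IsAcyclic.card_treesAbove_mul_sq_of_sup_edge [Nonempty V] (hG : G.IsAcyclic)
    (hk : 2 ≤ #G.components)
    (h : ∀ p ∈ G.unreachablePairs,
      (#(G ⊔ edge p.1 p.2).treesAbove : ℝ) * Fintype.card V ^ 2 =
        ∏ s ∈ (G ⊔ edge p.1 p.2).components, (Fintype.card V * #s : ℝ)) :
    (#G.treesAbove : ℝ) * Fintype.card V ^ 2 =
      ∏ s ∈ G.components, (Fintype.card V * #s : ℝ) := by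
  set n : ℝ := (Fintype.card V : ℝ) with hn_def
  set P := ∏ s ∈ G.components, (n * #s : ℝ)
  have hn : (0 : ℝ) < n := Nat.cast_pos.mpr Fintype.card_pos
  have hstep : ∀ p ∈ G.unreachablePairs, (#(G ⊔ edge p.1 p.2).treesAbove : ℝ) =
      P / n ^ 3 * ((#(G.component p.1) : ℝ)⁻¹ + (#(G.component p.2) : ℝ)⁻¹) := by
    rintro ⟨u, v⟩ hp
    have hprod := prod_components_sup_edge (mem_unreachablePairs.mp hp) fun s => (n * #s : ℝ)
    rw [← h _ hp, card_component_union (mem_unreachablePairs.mp hp)] at hprod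
    have hu : (0 : ℝ) < #(G.component u) := Nat.cast_pos.mpr (card_component_pos u)
    have hv : (0 : ℝ) < #(G.component v) := Nat.cast_pos.mpr (card_component_pos v)
    push_cast at hprod
    field_simp
    refine mul_left_cancel₀ hn.ne' ?_
    linear_combination hprod
  have hsum := congrArg (Nat.cast : ℕ → ℝ) (sum_card_treesAbove_sup_edge hG)
  rw [Nat.cast_sum, sum_congr rfl hstep, ← mul_sum, sum_unreachablePairs_inv_card_component,
    Nat.cast_mul, Nat.cast_mul, Nat.cast_sub (by omega)] at hsum
  have hk₁ : (#G.components : ℝ) - 1 ≠ 0 := by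
    rw [sub_ne_zero, Ne, Nat.cast_eq_one]
    omega
  field_simp at hsum
  refine mul_left_cancel₀ (mul_ne_zero hn.ne' hk₁) ?_
  push_cast at hsum
  rw [← hn_def] at hsum
  linear_combination -hsum / 2

/-- The generalized Cayley formula `τ(G) = n^(k-2) ∏ |C|`, multiplied by `n²` so that no
exponent `k - 2` occurs. -/
theorem IsAcyclic.card_treesAbove_mul_sq [Nonempty V] (hG : G.IsAcyclic) :
    (#G.treesAbove : ℝ) * Fintype.card V ^ 2 =
      ∏ s ∈ G.components, (Fintype.card V * #s : ℝ) := by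
  obtain ⟨k, hk⟩ : ∃ k, #G.components = k + 1 := Nat.exists_eq_succ_of_ne_zero
    (card_ne_zero.mpr ⟨_, component_mem_components (Classical.arbitrary V)⟩)
  induction k generalizing G with
  | zero =>
    obtain ⟨s, hs⟩ := card_eq_one.mp hk
    have hsum := G.sum_card_components
    rw [hs, sum_singleton] at hsum
    rw [treesAbove_eq_singleton (connected_of_card_components_eq_one hk) hG, hs, card_singleton,
      prod_singleton, hsum]
    ring
  | succ k ih =>
    refine hG.card_treesAbove_mul_sq_of_sup_edge (by omega) fun p hp => ?_
    have huv := mem_unreachablePairs.mp hp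
    exact ih (hG.sup_edge_of_not_reachable huv) (by have := card_components_sup_edge huv; omega)

end Cayley

section AdjClosed

variable {G H : SimpleGraph V} {S : Set V}

def AdjClosed (G : SimpleGraph V) (S : Set V) : Prop :=
  ∀ ⦃x y⦄, G.Adj x y → (x ∈ S ↔ y ∈ S)

@[simp]
lemma adjClosed_compl : G.AdjClosed Sᶜ ↔ G.AdjClosed S :=
  ⟨fun h _ _ hxy => not_iff_not.mp (h hxy), fun h _ _ hxy => not_congr (h hxy)⟩

lemma AdjClosed.sup (hG : G.AdjClosed S) (hH : H.AdjClosed S) : (G ⊔ H).AdjClosed S := by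
  rintro x y (h | h)
  exacts [hG h, hH h]

lemma adjClosed_of_support_subset (h : H.support ⊆ S) : H.AdjClosed S :=
  fun _ _ hxy => iff_of_true (h ⟨_, hxy⟩) (h ⟨_, hxy.symm⟩)

lemma adjClosed_preimage_connectedComponentMk (T : Set G.ConnectedComponent) :
    G.AdjClosed (G.connectedComponentMk ⁻¹' T) :=
  fun _ _ hxy => by simp only [Set.mem_preimage, ConnectedComponent.eq.mpr hxy.reachable]

lemma AdjClosed.mem_iff_of_reachable (hS : G.AdjClosed S) {v w : V} (h : G.Reachable v w) :
    v ∈ S ↔ w ∈ S := by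
  obtain ⟨p⟩ := h
  induction p with
  | nil => rfl
  | cons h _ ih => exact (hS h).trans ih

lemma Walk.edges_subset_edgeSet_of_adjClosed (hS : G.AdjClosed S) (hH : H.support ⊆ Sᶜ)
    {v w : V} (p : (G ⊔ H).Walk v w) (hv : v ∈ S) : ∀ e ∈ p.edges, e ∈ G.edgeSet := by
  induction p with
  | nil => simp
  | @cons a b _ h _ ih =>
    have hG : G.Adj a b := h.resolve_right fun h => hH ⟨b, h⟩ hv
    intro e he
    rcases List.mem_cons.mp he with rfl | he
    exacts [hG, ih ((hS hG).mp hv) e he]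

lemma IsAcyclic.not_isCycle_sup (hG : G.IsAcyclic) (hS : G.AdjClosed S) (hH : H.support ⊆ Sᶜ)
    {v : V} (hv : v ∈ S) (c : (G ⊔ H).Walk v v) : ¬c.IsCycle := fun hc =>
  hG (c.transfer G (c.edges_subset_edgeSet_of_adjClosed hS hH hv)) (hc.transfer _)

variable [Fintype V]

lemma component_sup_of_adjClosed (hS : G.AdjClosed S) (hH : H.support ⊆ Sᶜ) {v : V}
    (hv : v ∈ S) : (G ⊔ H).component v = G.component v := by
  ext w
  simp only [mem_component]
  exact ⟨fun ⟨p⟩ => ⟨p.transfer G (p.edges_subset_edgeSet_of_adjClosed hS hH hv)⟩,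
    fun h => h.mono le_sup_left⟩

variable (G S) in
noncomputable def componentsIn : Finset (Finset V) := (univ.filter (· ∈ S)).image G.component

lemma components_eq_union_componentsIn :
    G.components = G.componentsIn S ∪ G.componentsIn Sᶜ := by
  rw [componentsIn, componentsIn, ← image_union, components]
  congr
  ext
  simp [em]

lemma AdjClosed.disjoint_componentsIn (hS : G.AdjClosed S) :
    Disjoint (G.componentsIn S) (G.componentsIn Sᶜ) := by
  simp only [componentsIn, Finset.disjoint_left, mem_image, mem_filter, mem_univ, true_and]
  rintro _ ⟨x, hx, rfl⟩ ⟨y, hy, hyx⟩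
  exact hy ((hS.mem_iff_of_reachable (component_eq_component_iff.mp hyx)).mpr hx)

lemma AdjClosed.prod_components {M : Type*} [CommMonoid M] (hS : G.AdjClosed S)
    (f : Finset V → M) :
    ∏ s ∈ G.components, f s =
      (∏ s ∈ G.componentsIn S, f s) * ∏ s ∈ G.componentsIn Sᶜ, f s := by
  rw [components_eq_union_componentsIn, prod_union hS.disjoint_componentsIn]

lemma componentsIn_congr {G' : SimpleGraph V} (h : ∀ v ∈ S, G.component v = G'.component v) :
    G.componentsIn S = G'.componentsIn S :=
  image_congr fun v hv => h v (mem_filter.mp hv).2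

end AdjClosed

section Separated

variable {F H₁ H₂ : SimpleGraph V} {R : Set V}

lemma exists_adjClosed_separating
    (hdisj : ∀ u v : V, u ∈ H₁.support → v ∈ H₂.support → ¬F.Reachable u v) :
    ∃ R, F.AdjClosed R ∧ H₁.support ⊆ Rᶜ ∧ H₂.support ⊆ R := by
  refine ⟨F.connectedComponentMk ⁻¹' (F.connectedComponentMk '' H₂.support),
    adjClosed_preimage_connectedComponentMk _, ?_, Set.subset_preimage_image _ _⟩
  rintro u hu ⟨v, hv, huv⟩
  exact hdisj u v hu hv (ConnectedComponent.eq.mp huv.symm)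

variable (hR : F.AdjClosed R) (h₁ : H₁.support ⊆ Rᶜ) (h₂ : H₂.support ⊆ R)
include hR h₁ h₂

lemma isAcyclic_sup_sup_of_separating (hA₁ : (F ⊔ H₁).IsAcyclic)
    (hA₂ : (F ⊔ H₂).IsAcyclic) : (F ⊔ H₁ ⊔ H₂).IsAcyclic := by
  have hH₁ : H₁.AdjClosed R := adjClosed_compl.mp (adjClosed_of_support_subset h₁)
  intro v c hc
  by_cases hv : v ∈ R
  · refine hA₂.not_isCycle_sup (hR.sup (adjClosed_of_support_subset h₂)) h₁ hv
      (c.transfer _ fun e he => ?_) (hc.transfer _)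
    rw [sup_right_comm]
    exact c.edges_subset_edgeSet he
  · exact hA₁.not_isCycle_sup (adjClosed_compl.mpr (hR.sup hH₁)) (by simpa using h₂) hv c hc

lemma prod_components_sup_sup_mul_of_separating [Fintype V] {M : Type*} [CommMonoid M]
    (f : Finset V → M) :
    (∏ s ∈ (F ⊔ H₁ ⊔ H₂).components, f s) * ∏ s ∈ F.components, f s =
      (∏ s ∈ (F ⊔ H₁).components, f s) * ∏ s ∈ (F ⊔ H₂).components, f s := by
  have hFH₁ : (F ⊔ H₁).AdjClosed R :=
    hR.sup (adjClosed_compl.mp (adjClosed_of_support_subset h₁))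
  have hFH₂ : (F ⊔ H₂).AdjClosed R := hR.sup (adjClosed_of_support_subset h₂)
  have h₂' : H₂.support ⊆ Rᶜᶜ := by simpa using h₂
  have hin₁₂ : (F ⊔ H₁ ⊔ H₂).componentsIn R = (F ⊔ H₂).componentsIn R := by
    rw [sup_right_comm]
    exact componentsIn_congr fun v hv => component_sup_of_adjClosed hFH₂ h₁ hv
  have hout₁₂ : (F ⊔ H₁ ⊔ H₂).componentsIn Rᶜ = (F ⊔ H₁).componentsIn Rᶜ :=
    componentsIn_congr fun v hv => component_sup_of_adjClosed (adjClosed_compl.mpr hFH₁) h₂' hv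
  have hin₁ : (F ⊔ H₁).componentsIn R = F.componentsIn R :=
    componentsIn_congr fun v hv => component_sup_of_adjClosed hR h₁ hv
  have hout₂ : (F ⊔ H₂).componentsIn Rᶜ = F.componentsIn Rᶜ :=
    componentsIn_congr fun v hv => component_sup_of_adjClosed (adjClosed_compl.mpr hR) h₂' hv
  rw [(hFH₁.sup (adjClosed_of_support_subset h₂)).prod_components, hR.prod_components,
    hFH₁.prod_components, hFH₂.prod_components, hin₁₂, hout₁₂, hin₁, hout₂]
  ac_rfl

end Separated

section Independence

variable [Fintype V] {F H₁ H₂ : SimpleGraph V}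

theorem card_treesAbove_sup_sup_mul
    (hdisj : ∀ u v : V, u ∈ H₁.support → v ∈ H₂.support → ¬F.Reachable u v) :
    #(F ⊔ H₁ ⊔ H₂).treesAbove * #F.treesAbove =
      #(F ⊔ H₁).treesAbove * #(F ⊔ H₂).treesAbove := by
  rcases eq_or_ne #(F ⊔ H₁).treesAbove 0 with h₁ | h₁
  · rw [h₁, card_treesAbove_eq_zero_of_le le_sup_left h₁, zero_mul, zero_mul]
  rcases eq_or_ne #(F ⊔ H₂).treesAbove 0 with h₂ | h₂
  · rw [h₂, card_treesAbove_eq_zero_of_le (sup_le_sup_right le_sup_left H₂) h₂, zero_mul,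
      mul_zero]
  have := nonempty_of_card_treesAbove_ne_zero h₁
  have hA₁ := isAcyclic_of_card_treesAbove_ne_zero h₁
  have hA₂ := isAcyclic_of_card_treesAbove_ne_zero h₂
  obtain ⟨R, hR, hR₁, hR₂⟩ := exists_adjClosed_separating hdisj
  have key := prod_components_sup_sup_mul_of_separating hR hR₁ hR₂
    fun s => (Fintype.card V * #s : ℝ)
  rw [← (isAcyclic_sup_sup_of_separating hR hR₁ hR₂ hA₁ hA₂).card_treesAbove_mul_sq,
    ← (hA₁.anti le_sup_left).card_treesAbove_mul_sq, ← hA₁.card_treesAbove_mul_sq,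
    ← hA₂.card_treesAbove_mul_sq] at key
  have hn : ((Fintype.card V : ℝ) ^ 2) ^ 2 ≠ 0 := by simp
  have : (#(F ⊔ H₁ ⊔ H₂).treesAbove * #F.treesAbove : ℝ) =
      #(F ⊔ H₁).treesAbove * #(F ⊔ H₂).treesAbove :=
    mul_right_cancel₀ hn (by linear_combination key)
  exact_mod_cast this

end Independence

end SimpleGraph

open SimpleGraph

theorem F_disjoint_independent_general (n : ℕ)
    (F H₁ H₂ : SimpleGraph (Fin n))
    (hdisj : ∀ u v : Fin n, u ∈ H₁.support → v ∈ H₂.support → ¬ F.Reachable u v) :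
    (Nat.card {T : SimpleGraph (Fin n) //
        F ≤ T ∧ H₁ ≤ T ∧ H₂ ≤ T ∧ T.Connected ∧ T.IsAcyclic} : ℝ) /
      (Nat.card {T : SimpleGraph (Fin n) // F ≤ T ∧ T.Connected ∧ T.IsAcyclic} : ℝ) =
    ((Nat.card {T : SimpleGraph (Fin n) //
        F ≤ T ∧ H₁ ≤ T ∧ T.Connected ∧ T.IsAcyclic} : ℝ) /
      (Nat.card {T : SimpleGraph (Fin n) // F ≤ T ∧ T.Connected ∧ T.IsAcyclic} : ℝ)) *
    ((Nat.card {T : SimpleGraph (Fin n) //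
        F ≤ T ∧ H₂ ≤ T ∧ T.Connected ∧ T.IsAcyclic} : ℝ) /
      (Nat.card {T : SimpleGraph (Fin n) // F ≤ T ∧ T.Connected ∧ T.IsAcyclic} : ℝ)) := by
  rw [natCard_eq_card_treesAbove (G := F ⊔ H₁ ⊔ H₂) fun T => by simp [and_assoc],
    natCard_eq_card_treesAbove (G := F) fun T => .rfl,
    natCard_eq_card_treesAbove (G := F ⊔ H₁) fun T => by simp [and_assoc],
    natCard_eq_card_treesAbove (G := F ⊔ H₂) fun T => by simp [and_assoc]]
  rcases eq_or_ne #F.treesAbove 0 with h | h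
  · simp [h]
  rw [div_mul_div_comm, ← Nat.cast_mul, ← card_treesAbove_sup_sup_mul hdisj, Nat.cast_mul,
    mul_div_mul_right _ _ (Nat.cast_ne_zero.mpr h)]

/-- If `H₁` and `H₂` are `F`-disjoint forests, then for `T` uniformly random among
spanning trees containing the spanning forest `F`, the events `H₁ ⊆ T` and `H₂ ⊆ T`
are independent. -/
theorem F_disjoint_independent (n : ℕ)
    (F H₁ H₂ : SimpleGraph (Fin n)) (hF : F.IsAcyclic)
    (hH₁ : H₁.IsAcyclic) (hH₂ : H₂.IsAcyclic)
    (hdisj : ∀ u v : Fin n, u ∈ H₁.support → v ∈ H₂.support → ¬ F.Reachable u v) :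
    (Nat.card {T : SimpleGraph (Fin n) //
        F ≤ T ∧ H₁ ≤ T ∧ H₂ ≤ T ∧ T.Connected ∧ T.IsAcyclic} : ℝ) /
      (Nat.card {T : SimpleGraph (Fin n) // F ≤ T ∧ T.Connected ∧ T.IsAcyclic} : ℝ) =
    ((Nat.card {T : SimpleGraph (Fin n) //
        F ≤ T ∧ H₁ ≤ T ∧ T.Connected ∧ T.IsAcyclic} : ℝ) /
      (Nat.card {T : SimpleGraph (Fin n) // F ≤ T ∧ T.Connected ∧ T.IsAcyclic} : ℝ)) *
    ((Nat.card {T : SimpleGraph (Fin n) //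
        F ≤ T ∧ H₂ ≤ T ∧ T.Connected ∧ T.IsAcyclic} : ℝ) /
      (Nat.card {T : SimpleGraph (Fin n) // F ≤ T ∧ T.Connected ∧ T.IsAcyclic} : ℝ)) :=
  F_disjoint_independent_general n F H₁ H₂ hdisj
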